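/- arXiv:math/0605119 — 2 statements merged into one kernel-verified Lean document; each statement's English description precedes it below -/
import Mathlib

section
/- Let I be a monomial ideal of height 1 in S = K[x_1,x_2,x_3]. Then I = uJ where u is a monomial of S and J is a monomial ideal of height ≥ 2; moreover, I is pretty clean if and only if J is pretty clean. -/
open MvPolynomial

/-- The monomial `x^a` in `K[x_i : i ∈ σ]`. -/
noncomputable def mono (K : Type*) [Field K] {σ : Type*} (a : σ →₀ ℕ) :
    MvPolynomial σ K :=
  MvPolynomial.monomial a 1

/-- An ideal is a monomial ideal if it is generated by monomials. -/
def IsMonomialIdeal {K : Type*} [Field K] {σ : Type*}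
    (I : Ideal (MvPolynomial σ K)) : Prop :=
  ∃ A : Set (σ →₀ ℕ), I = Ideal.span ((fun a => mono K a) '' A)

/-- `IsPrimeFiltration I c u` says that `c` is a chain of (monomial) ideals
`I = I₀ ⊆ I₁ ⊆ ⋯ ⊆ I_r = S` with `I_j = I_{j-1} + (x^{u j})` and
`I_{j-1} : x^{u j}` a prime ideal, i.e. `I_j/I_{j-1} ≅ S/P_j`. -/
def IsPrimeFiltration {K : Type*} [Field K] {σ : Type*}
    (I : Ideal (MvPolynomial σ K)) {r : ℕ}
    (c : Fin (r + 1) → Ideal (MvPolynomial σ K)) (u : Fin r → (σ →₀ ℕ)) : Prop :=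
  c 0 = I ∧ c (Fin.last r) = ⊤ ∧
    (∀ j : Fin r, c j.succ = c j.castSucc ⊔ Ideal.span {mono K (u j)}) ∧
    (∀ j : Fin r, ((c j.castSucc).colon (Ideal.span {mono K (u j)})).IsPrime)

/-- The `j`-th prime factor `P_j = I_{j-1} : u_j` of a prime filtration. -/
noncomputable def filtFactor {K : Type*} [Field K] {σ : Type*} {r : ℕ}
    (c : Fin (r + 1) → Ideal (MvPolynomial σ K)) (u : Fin r → (σ →₀ ℕ)) (j : Fin r) :
    Ideal (MvPolynomial σ K) :=
  (c j.castSucc).colon (Ideal.span {mono K (u j)})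

/-- A prime filtration is pretty clean if `i < j` and `P_i ⊆ P_j` imply `P_i = P_j`. -/
def IsPrettyCleanFiltration {K : Type*} [Field K] {σ : Type*}
    (I : Ideal (MvPolynomial σ K)) {r : ℕ}
    (c : Fin (r + 1) → Ideal (MvPolynomial σ K)) (u : Fin r → (σ →₀ ℕ)) : Prop :=
  IsPrimeFiltration I c u ∧
    ∀ i j : Fin r, i < j → filtFactor c u i ≤ filtFactor c u j →
      filtFactor c u i = filtFactor c u j

/-- A monomial ideal is pretty clean if it admits a pretty clean filtration. -/
def IsPrettyClean {K : Type*} [Field K] {σ : Type*}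
    (I : Ideal (MvPolynomial σ K)) : Prop :=
  ∃ (r : ℕ) (c : Fin (r + 1) → Ideal (MvPolynomial σ K)) (u : Fin r → (σ →₀ ℕ)),
    IsPrettyCleanFiltration I c u

/-- A prime filtration is clean if its support is the set of minimal primes of `I`. -/
def IsCleanFiltration {K : Type*} [Field K] {σ : Type*}
    (I : Ideal (MvPolynomial σ K)) {r : ℕ}
    (c : Fin (r + 1) → Ideal (MvPolynomial σ K)) (u : Fin r → (σ →₀ ℕ)) : Prop :=
  IsPrimeFiltration I c u ∧
    {P | ∃ j : Fin r, filtFactor c u j = P} = I.minimalPrimes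

/-- A monomial ideal is clean if it admits a clean filtration. -/
def IsClean {K : Type*} [Field K] {σ : Type*}
    (I : Ideal (MvPolynomial σ K)) : Prop :=
  ∃ (r : ℕ) (c : Fin (r + 1) → Ideal (MvPolynomial σ K)) (u : Fin r → (σ →₀ ℕ)),
    IsCleanFiltration I c u

/-- The graded maximal ideal `m = (x_i : i ∈ σ)`. -/
noncomputable def maxIdeal (K : Type*) [Field K] (σ : Type*) :
    Ideal (MvPolynomial σ K) :=
  Ideal.span (Set.range (X : σ → MvPolynomial σ K))

/-- The saturation `Ĩ = I : m^∞ = ⋃ₖ (I : mᵏ)`. -/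
noncomputable def saturation {K : Type*} [Field K] {σ : Type*}
    (I : Ideal (MvPolynomial σ K)) : Ideal (MvPolynomial σ K) :=
  ⨆ k : ℕ, I.colon ((maxIdeal K σ ^ k : Ideal (MvPolynomial σ K)) : Set (MvPolynomial σ K))

/-- The height of an ideal: the infimum of heights of primes minimal over it. -/
noncomputable def idealHeight {R : Type*} [CommRing R] (I : Ideal R) : ℕ∞ :=
  ⨅ P : {P : Ideal R // P ∈ I.minimalPrimes},
    Order.height (⟨P.1, P.2.1.1⟩ : PrimeSpectrum R)
/-!
Write `I = (x^b : b ∈ A)` and let `a` be the componentwise minimum of the exponents in `A`. Then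
`I = x^a J` with `J = I : x^a = (x^(b - a) : b ∈ A)`. For every `i` some generator of `J` is not
divisible by `x_i`, so `J ⊄ (x_i)`; a minimal prime of `J` contains some `x_i`, hence strictly
contains the chain `0 ⊂ (x_i)`, and `J` has height at least 2.

Pretty cleanness passes from `I` to `J = I : x^a` because taking the colon by a monomial turns a
prime filtration of a monomial ideal into one whose factors are a subsequence of the old ones.
Conversely, `x^a` times a pretty clean filtration of `J` runs from `I` to `(x^a)`, and removing
one variable at a time continues it to `S` with factors `S/(x_i)`; since `J ⊄ (x_i)`, none of the
earlier primes lies in one of these.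
-/

section Monomials

variable {K : Type*} [Field K] {σ : Type*}

lemma mono_mul (a b : σ →₀ ℕ) : mono K a * mono K b = mono K (a + b) := by
  simp [mono, monomial_mul]

lemma mono_ne_zero (a : σ →₀ ℕ) : mono K a ≠ 0 := by
  simp [mono]

lemma mono_single_one (i : σ) : mono K (Finsupp.single i 1) = X i := rfl

lemma mem_span_mono_image_iff {A : Set (σ →₀ ℕ)} {p : MvPolynomial σ K} :
    p ∈ Ideal.span ((fun a => mono K a) '' A) ↔ ∀ b ∈ p.support, ∃ a ∈ A, a ≤ b :=
  mem_ideal_span_monomial_image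

lemma mono_mem_span_X_iff {m : σ →₀ ℕ} {i : σ} :
    mono K m ∈ Ideal.span {(X i : MvPolynomial σ K)} ↔ m i ≠ 0 := by
  simp [Ideal.mem_span_singleton, mono]

lemma span_X_isPrime (i : σ) : (Ideal.span {(X i : MvPolynomial σ K)}).IsPrime :=
  (Ideal.span_singleton_prime (X_ne_zero i)).2 X_prime

lemma span_X_le_span_X_iff {i j : σ} :
    Ideal.span {(X i : MvPolynomial σ K)} ≤ Ideal.span {X j} ↔ i = j := by
  rw [Ideal.span_singleton_le_span_singleton, X_dvd_X, eq_comm]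

lemma colon_span_mono_image (A : Set (σ →₀ ℕ)) (u : σ →₀ ℕ) :
    (Ideal.span ((fun a => mono K a) '' A)).colon (Ideal.span {mono K u})
      = Ideal.span ((fun a => mono K a) '' ((· - u) '' A)) := by
  classical
  ext p
  rw [Ideal.mem_colon_span_singleton, mem_span_mono_image_iff, mem_span_mono_image_iff]
  constructor
  · intro h b hb
    obtain ⟨a, ha, hle⟩ := h (b + u) (by simpa [mono, coeff_mul_monomial] using hb)
    exact ⟨a - u, ⟨a, ha, rfl⟩, tsub_le_iff_right.2 hle⟩
  · intro h c hc
    obtain ⟨b, hb, d, hd, rfl⟩ := Finset.mem_add.1 (support_mul p (mono K u) hc)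
    obtain rfl : d = u := by simpa [mono] using support_monomial_subset hd
    obtain ⟨_, ⟨a, ha, rfl⟩, hle⟩ := h b hb
    exact ⟨a, ha, le_tsub_add.trans (add_le_add_left hle d)⟩

end Monomials

section Colon

variable {R : Type*} [CommRing R]

lemma colon_span_singleton_colon_span_singleton (I : Ideal R) (x y : R) :
    (I.colon (Ideal.span {x})).colon (Ideal.span {y}) = I.colon (Ideal.span {x * y}) := by
  ext p
  simp only [Ideal.mem_colon_span_singleton, mul_assoc, mul_comm y x]

lemma Ideal.IsPrime.colon_span_singleton_of_notMem {P : Ideal R} (hP : P.IsPrime) {z : R}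
    (hz : z ∉ P) : P.colon (Ideal.span {z}) = P := by
  ext p
  rw [Ideal.mem_colon_span_singleton]
  exact ⟨fun h => (hP.mem_or_mem h).resolve_right hz, fun h => P.mul_mem_right z h⟩

lemma span_singleton_mul_colon_span_singleton [IsDomain R] {m : R} (hm : m ≠ 0) (x : R) :
    (Ideal.span {x * m}).colon (Ideal.span {m}) = Ideal.span {x} := by
  ext p
  simp [Ideal.mem_span_singleton, mul_dvd_mul_iff_right hm]

lemma span_singleton_mul_colon_span_singleton_mul [IsDomain R] {m : R} (hm : m ≠ 0)
    (J : Ideal R) (v : R) :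
    (Ideal.span {m} * J).colon (Ideal.span {m * v}) = J.colon (Ideal.span {v}) := by
  ext p
  simp only [Ideal.mem_colon_span_singleton, Ideal.mem_span_singleton_mul,
    show ∀ y, m * y = p * (m * v) ↔ y = p * v from fun y => by
      rw [mul_left_comm, mul_right_inj' hm]]
  simp

end Colon

section MonomialIdeal

variable {K : Type*} [Field K] {σ : Type*}

lemma IsMonomialIdeal.sup_span_mono {M : Ideal (MvPolynomial σ K)} (hM : IsMonomialIdeal M)
    (l : σ →₀ ℕ) : IsMonomialIdeal (M ⊔ Ideal.span {mono K l}) := by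
  obtain ⟨A, rfl⟩ := hM
  exact ⟨A ∪ {l}, by rw [Set.image_union, Ideal.span_union, Set.image_singleton]⟩

lemma IsMonomialIdeal.sup_span_mono_colon {M : Ideal (MvPolynomial σ K)} (hM : IsMonomialIdeal M)
    (l u : σ →₀ ℕ) :
    (M ⊔ Ideal.span {mono K l}).colon (Ideal.span {mono K u})
      = M.colon (Ideal.span {mono K u}) ⊔ Ideal.span {mono K (l - u)} := by
  obtain ⟨A, rfl⟩ := hM
  rw [← Set.image_singleton (f := fun a => mono K a), ← Ideal.span_union, ← Set.image_union,
    colon_span_mono_image, colon_span_mono_image, Set.image_union, Set.image_union,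
    Ideal.span_union, Set.image_singleton, Set.image_singleton]

end MonomialIdeal

section Sequences

variable {K : Type*} [Field K] {σ : Type*}

/- A list `[l₀, l₁, …]` encodes the chain `I ⊆ I + (x^{l₀}) ⊆ I + (x^{l₀}, x^{l₁}) ⊆ ⋯`,
with last ideal `addMonos I L` and colon ideals `P_j` forming `monoColons I L`. -/
noncomputable def addMonos (I : Ideal (MvPolynomial σ K)) :
    List (σ →₀ ℕ) → Ideal (MvPolynomial σ K)
  | [] => I
  | l :: L => addMonos (I ⊔ Ideal.span {mono K l}) L

noncomputable def monoColons (I : Ideal (MvPolynomial σ K)) :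
    List (σ →₀ ℕ) → List (Ideal (MvPolynomial σ K))
  | [] => []
  | l :: L => I.colon (Ideal.span {mono K l}) :: monoColons (I ⊔ Ideal.span {mono K l}) L

def IsPrettyCleanSeq (I : Ideal (MvPolynomial σ K)) (L : List (σ →₀ ℕ)) : Prop :=
  addMonos I L = ⊤ ∧ (∀ P ∈ monoColons I L, P.IsPrime) ∧
    (monoColons I L).Pairwise fun P Q => P ≤ Q → P = Q

lemma addMonos_append (I : Ideal (MvPolynomial σ K)) (L₁ L₂ : List (σ →₀ ℕ)) :
    addMonos I (L₁ ++ L₂) = addMonos (addMonos I L₁) L₂ := by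
  induction L₁ generalizing I with
  | nil => rfl
  | cons l L ih => exact ih _

lemma monoColons_append (I : Ideal (MvPolynomial σ K)) (L₁ L₂ : List (σ →₀ ℕ)) :
    monoColons I (L₁ ++ L₂) = monoColons I L₁ ++ monoColons (addMonos I L₁) L₂ := by
  induction L₁ generalizing I with
  | nil => rfl
  | cons l L ih => simp [monoColons, addMonos, ih]

lemma length_monoColons (I : Ideal (MvPolynomial σ K)) (L : List (σ →₀ ℕ)) :
    (monoColons I L).length = L.length := by
  induction L generalizing I with
  | nil => rfl
  | cons l L ih => simp [monoColons, ih]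

lemma getElem_monoColons (I : Ideal (MvPolynomial σ K)) (L : List (σ →₀ ℕ)) (j : ℕ)
    (hj : j < L.length) :
    (monoColons I L)[j]'(by rwa [length_monoColons]) =
      (addMonos I (L.take j)).colon (Ideal.span {mono K L[j]}) := by
  induction L generalizing I j with
  | nil => simp at hj
  | cons l L ih =>
    cases j with
    | zero => rfl
    | succ j => exact ih _ j _

lemma le_of_mem_monoColons {I P : Ideal (MvPolynomial σ K)} {L : List (σ →₀ ℕ)}
    (hP : P ∈ monoColons I L) : I ≤ P := by
  induction L generalizing I with
  | nil => simp [monoColons] at hP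
  | cons l L ih =>
    rcases List.mem_cons.1 hP with rfl | hP
    · exact Ideal.le_colon
    · exact le_sup_left.trans (ih hP)

end Sequences

section Filtrations

variable {K : Type*} [Field K] {σ : Type*} {I : Ideal (MvPolynomial σ K)} {r : ℕ}
  {c : Fin (r + 1) → Ideal (MvPolynomial σ K)} {u : Fin r → (σ →₀ ℕ)}

lemma IsPrimeFiltration.eq_addMonos_take (h : IsPrimeFiltration I c u) (k : Fin (r + 1)) :
    c k = addMonos I ((List.ofFn u).take k) := by
  induction k using Fin.induction with
  | zero => simpa [addMonos] using h.1
  | succ j ih =>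
    rw [h.2.2.1 j, ih, Fin.val_succ, List.take_add_one, addMonos_append]
    simp [addMonos]

lemma IsPrimeFiltration.monoColons_ofFn (h : IsPrimeFiltration I c u) :
    monoColons I (List.ofFn u) = List.ofFn (filtFactor c u) := by
  refine List.ext_getElem (by simp [length_monoColons]) fun j h₁ h₂ => ?_
  rw [getElem_monoColons _ _ _ (by simpa using h₂), List.getElem_ofFn]
  simp [filtFactor, h.eq_addMonos_take]

lemma isPrettyClean_iff_exists_isPrettyCleanSeq :
    IsPrettyClean I ↔ ∃ L, IsPrettyCleanSeq I L := by
  constructor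
  · rintro ⟨r, c, u, hf, hpc⟩
    refine ⟨List.ofFn u, ?_, ?_, ?_⟩
    · have := hf.eq_addMonos_take (Fin.last r)
      rwa [hf.2.1, Fin.val_last, List.take_of_length_le (by simp), eq_comm] at this
    · rw [hf.monoColons_ofFn, List.forall_mem_ofFn_iff]
      exact hf.2.2.2
    · rw [hf.monoColons_ofFn, List.pairwise_ofFn]
      exact hpc
  · rintro ⟨L, htop, hprime, hpw⟩
    have hfac : ∀ j : Fin L.length,
        filtFactor (fun k : Fin (L.length + 1) => addMonos I (L.take k)) (fun j => L[j]) j =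
          (monoColons I L)[(j : ℕ)]'(by simp [length_monoColons]) :=
      fun j => (getElem_monoColons I L j j.2).symm
    refine ⟨L.length, fun k => addMonos I (L.take k), fun j => L[j],
      ⟨rfl, ?_, fun j => ?_, fun j => ?_⟩, fun i j hij => ?_⟩
    · simpa using htop
    · simp only [Fin.val_succ, List.take_add_one, addMonos_append, Fin.val_castSucc]
      simp [addMonos]
    · have := hprime _ (List.getElem_mem (n := j) (by simp [length_monoColons]))
      rw [← hfac j] at this
      exact this
    · rw [hfac, hfac]
      exact List.pairwise_iff_getElem.1 hpw i j _ _ hij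

end Filtrations

section Staircase

variable {K : Type*} [Field K] {σ : Type*}

lemma addMonos_span_mono_mul (a : σ →₀ ℕ) (M : Ideal (MvPolynomial σ K))
    (L : List (σ →₀ ℕ)) :
    addMonos (Ideal.span {mono K a} * M) (L.map (a + ·))
      = Ideal.span {mono K a} * addMonos M L := by
  induction L generalizing M with
  | nil => rfl
  | cons l L ih =>
    simp only [List.map_cons, addMonos, ← mono_mul, ← Ideal.span_singleton_mul_span_singleton,
      ← Ideal.mul_sup, ih]

lemma monoColons_span_mono_mul (a : σ →₀ ℕ) (M : Ideal (MvPolynomial σ K))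
    (L : List (σ →₀ ℕ)) :
    monoColons (Ideal.span {mono K a} * M) (L.map (a + ·)) = monoColons M L := by
  induction L generalizing M with
  | nil => rfl
  | cons l L ih =>
    rw [List.map_cons, monoColons, monoColons, ← mono_mul,
      span_singleton_mul_colon_span_singleton_mul (mono_ne_zero a),
      ← Ideal.span_singleton_mul_span_singleton, ← Ideal.mul_sup, ih]

/- Peel off one variable at a time: `(x^v) ⊂ (x^v / x_i) ⊂ ⋯ ⊂ S`. -/
lemma exists_addMonos_span_mono_eq_top (v : σ →₀ ℕ) :
    ∃ L, addMonos (Ideal.span {mono K v}) L = ⊤ ∧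
      ∀ P ∈ monoColons (Ideal.span {mono K v}) L, ∃ i, P = Ideal.span {X i} := by
  induction v using WellFoundedLT.induction with
  | _ v ih =>
    by_cases hv : v = 0
    · exact ⟨[], by simp [addMonos, hv, mono], by simp [monoColons]⟩
    obtain ⟨i, hi⟩ := Finsupp.ne_iff.1 hv
    set w := v - Finsupp.single i 1
    have hwv : w + Finsupp.single i 1 = v :=
      tsub_add_cancel_of_le (by simpa [Finsupp.single_le_iff, Nat.one_le_iff_ne_zero] using hi)
    have hvw : mono K v = X i * mono K w := by
      rw [← mono_single_one, mono_mul, add_comm, hwv]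
    obtain ⟨L, htop, hfac⟩ := ih w (hwv ▸ lt_add_of_pos_right w (pos_iff_ne_zero.2 (by simp)))
    have hsup : Ideal.span {mono K v} ⊔ Ideal.span {mono K w} = Ideal.span {mono K w} :=
      sup_eq_right.2 (Ideal.span_singleton_le_span_singleton.2 (Dvd.intro_left _ hvw.symm))
    refine ⟨w :: L, by rwa [addMonos, hsup], fun P hP => ?_⟩
    rw [monoColons, hsup, List.mem_cons] at hP
    rcases hP with rfl | hP
    · exact ⟨i, by rw [hvw, span_singleton_mul_colon_span_singleton (mono_ne_zero w)]⟩
    · exact hfac P hP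

lemma IsPrettyClean.span_mono_mul {J : Ideal (MvPolynomial σ K)} (hJ : IsPrettyClean J)
    (hX : ∀ i, ¬ J ≤ Ideal.span {X i}) (a : σ →₀ ℕ) :
    IsPrettyClean (Ideal.span {mono K a} * J) := by
  obtain ⟨L, htop, hprime, hpw⟩ := isPrettyClean_iff_exists_isPrettyCleanSeq.1 hJ
  obtain ⟨L₀, htop₀, hfac₀⟩ := exists_addMonos_span_mono_eq_top (K := K) a
  have hshift : addMonos (Ideal.span {mono K a} * J) (L.map (a + ·)) = Ideal.span {mono K a} := by
    rw [addMonos_span_mono_mul, htop, Ideal.mul_top]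
  refine isPrettyClean_iff_exists_isPrettyCleanSeq.2 ⟨L.map (a + ·) ++ L₀, ?_, ?_, ?_⟩
  · rwa [addMonos_append, hshift]
  · rw [monoColons_append, hshift, monoColons_span_mono_mul]
    rintro P hP
    rcases List.mem_append.1 hP with hP | hP
    · exact hprime P hP
    · obtain ⟨i, rfl⟩ := hfac₀ P hP
      exact span_X_isPrime i
  · rw [monoColons_append, hshift, monoColons_span_mono_mul, List.pairwise_append]
    refine ⟨hpw, List.pairwise_of_forall_mem_list fun P hP Q hQ hPQ => ?_,
      fun P hP Q hQ hPQ => ?_⟩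
    · obtain ⟨i, rfl⟩ := hfac₀ P hP
      obtain ⟨j, rfl⟩ := hfac₀ Q hQ
      rw [span_X_le_span_X_iff.1 hPQ]
    · obtain ⟨i, rfl⟩ := hfac₀ Q hQ
      exact absurd ((le_of_mem_monoColons hP).trans hPQ) (hX i)

end Staircase

section ColonByMonomial

variable {K : Type*} [Field K] {σ : Type*}

lemma tsub_add_eq_tsub_add (u l : σ →₀ ℕ) : u - l + l = l - u + u := by
  ext i
  simp only [Finsupp.add_apply, Finsupp.tsub_apply]
  omega

/- Both sides are `M : x^(u ⊔ l)`. -/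
lemma colon_span_mono_colon_span_mono_tsub (M : Ideal (MvPolynomial σ K)) (u l : σ →₀ ℕ) :
    (M.colon (Ideal.span {mono K u})).colon (Ideal.span {mono K (l - u)})
      = (M.colon (Ideal.span {mono K l})).colon (Ideal.span {mono K (u - l)}) := by
  rw [colon_span_singleton_colon_span_singleton, colon_span_singleton_colon_span_singleton,
    mono_mul, mono_mul, add_comm u, add_comm l, tsub_add_eq_tsub_add]

/- Colon by `x^u` turns a prime filtration step `M ⊂ M + (x^l)` of a monomial ideal either into
an equality or into the step `M : x^u ⊂ M : x^u + (x^(l-u))` with the same prime factor. -/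
lemma IsMonomialIdeal.exists_monoColons_colon_sublist {M : Ideal (MvPolynomial σ K)}
    (hM : IsMonomialIdeal M) (u : σ →₀ ℕ) (L : List (σ →₀ ℕ))
    (hL : ∀ P ∈ monoColons M L, P.IsPrime) :
    ∃ L', addMonos (M.colon (Ideal.span {mono K u})) L'
        = (addMonos M L).colon (Ideal.span {mono K u}) ∧
      (monoColons (M.colon (Ideal.span {mono K u})) L').Sublist (monoColons M L) := by
  induction L generalizing M with
  | nil => exact ⟨[], rfl, List.Sublist.slnil⟩
  | cons l L ih =>
    have hP := hL _ List.mem_cons_self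
    obtain ⟨L', htop, hsub⟩ :=
      ih (hM.sup_span_mono l) fun P hP => hL P (List.mem_cons_of_mem _ hP)
    rw [hM.sup_span_mono_colon] at htop hsub
    by_cases hdeg : mono K (l - u) ∈ M.colon (Ideal.span {mono K u})
    · rw [sup_eq_left.2 ((Ideal.span_singleton_le_iff_mem _).2 hdeg)] at htop hsub
      exact ⟨L', htop, hsub.trans (List.sublist_cons_self _ _)⟩
    · have hnot : mono K (u - l) ∉ M.colon (Ideal.span {mono K l}) := by
        rwa [Ideal.mem_colon_span_singleton, mono_mul, tsub_add_eq_tsub_add, ← mono_mul,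
          ← Ideal.mem_colon_span_singleton]
      refine ⟨(l - u) :: L', htop, ?_⟩
      rw [monoColons, monoColons, colon_span_mono_colon_span_mono_tsub,
        hP.colon_span_singleton_of_notMem hnot]
      exact hsub.cons_cons _

lemma IsPrettyClean.colon_span_mono {M : Ideal (MvPolynomial σ K)} (hpc : IsPrettyClean M)
    (hM : IsMonomialIdeal M) (u : σ →₀ ℕ) :
    IsPrettyClean (M.colon (Ideal.span {mono K u})) := by
  obtain ⟨L, htop, hprime, hpw⟩ := isPrettyClean_iff_exists_isPrettyCleanSeq.1 hpc
  obtain ⟨L', htop', hsub⟩ := hM.exists_monoColons_colon_sublist u L hprime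
  exact isPrettyClean_iff_exists_isPrettyCleanSeq.2
    ⟨L', by rw [htop', htop, Submodule.top_colon], fun P hP => hprime P (hsub.subset hP),
      hpw.sublist hsub⟩

end ColonByMonomial

lemma idealHeight_bot {R : Type*} [CommRing R] [IsDomain R] : idealHeight (⊥ : Ideal R) = 0 := by
  have hmin : ⊥ ∈ (⊥ : Ideal R).minimalPrimes :=
    ⟨⟨Ideal.isPrime_bot, le_rfl⟩, fun _ _ _ => bot_le⟩
  have h0 : Order.height (⟨⊥, Ideal.isPrime_bot⟩ : PrimeSpectrum R) = 0 :=
    Order.height_eq_zero.2 fun b _ => (bot_le : ⊥ ≤ b.asIdeal)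
  exact nonpos_iff_eq_zero.1
    ((iInf_le _ (⟨⊥, hmin⟩ : {P // P ∈ (⊥ : Ideal R).minimalPrimes})).trans_eq h0)

section Height

variable {K : Type*} [Field K] {σ : Type*}

lemma Ideal.IsPrime.exists_X_mem_of_mono_mem {P : Ideal (MvPolynomial σ K)} (hP : P.IsPrime)
    {m : σ →₀ ℕ} (hm : mono K m ∈ P) : ∃ i, X i ∈ P := by
  classical
  rw [mono, monomial_eq, map_one, one_mul, Finsupp.prod] at hm
  obtain ⟨i, -, hXi⟩ := hP.prod_mem_iff.1 hm
  exact ⟨i, hP.mem_of_pow_mem _ hXi⟩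

lemma two_le_idealHeight {J : Ideal (MvPolynomial σ K)} {m : σ →₀ ℕ} (hm : mono K m ∈ J)
    (hX : ∀ i, ¬ J ≤ Ideal.span {X i}) : 2 ≤ idealHeight J := by
  refine le_iInf fun ⟨P, hP⟩ => ?_
  obtain ⟨i, hXi⟩ := hP.1.1.exists_X_mem_of_mono_mem (hP.1.2 hm)
  let Q : PrimeSpectrum (MvPolynomial σ K) := ⟨Ideal.span {X i}, span_X_isPrime i⟩
  have hbotQ : ⊥ < Q := by
    rw [← PrimeSpectrum.asIdeal_lt_asIdeal, PrimeSpectrum.asIdeal_bot, bot_lt_iff_ne_bot, Ne,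
      Ideal.span_singleton_eq_bot]
    exact X_ne_zero i
  have hQP : Q < ⟨P, hP.1.1⟩ := by
    rw [← PrimeSpectrum.asIdeal_lt_asIdeal]
    exact lt_of_le_of_ne ((Ideal.span_singleton_le_iff_mem _).2 hXi)
      fun h : Ideal.span {X i} = P => hX i (h ▸ hP.1.2)
  exact Order.add_one_le_of_lt (Order.one_lt_height_iff.2 ⟨Q, ⊥, hbotQ, hQP⟩)

end Height

section Factorization

variable {K : Type*} [Field K] {σ : Type*}

lemma exists_forall_isLeast_image_apply [Finite σ] {A : Set (σ →₀ ℕ)} (hA : A.Nonempty) :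
    ∃ a : σ →₀ ℕ, ∀ i, IsLeast ((· i) '' A) (a i) :=
  ⟨Finsupp.equivFunOnFinite.symm fun i => sInf ((· i) '' A),
    fun _ => ⟨Nat.sInf_mem (hA.image _), fun _ hn => Nat.sInf_le hn⟩⟩

lemma span_mono_image_eq_span_mono_mul {A : Set (σ →₀ ℕ)} {a : σ →₀ ℕ}
    (ha : ∀ b ∈ A, a ≤ b) :
    Ideal.span ((fun b => mono K b) '' A)
      = Ideal.span {mono K a} * Ideal.span ((fun b => mono K b) '' ((· - a) '' A)) := by
  rw [Ideal.span_mul_span', Set.singleton_mul, Set.image_image, Set.image_image]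
  refine congrArg _ (Set.image_congr fun b hb => ?_)
  rw [mono_mul, add_tsub_cancel_of_le (ha b hb)]

end Factorization

/-- A monomial ideal of height 1 in `S = K[x_1,x_2,x_3]` can be
written as `I = uJ` with `u` a monomial and `J` a monomial ideal of height `≥ 2`;
moreover `I` is pretty clean if and only if `J` is pretty clean. -/
theorem height_one_eq_monomial_mul_and_prettyClean_iff
    {K : Type*} [Field K] (I : Ideal (MvPolynomial (Fin 3) K))
    (hI : IsMonomialIdeal I) (h : idealHeight I = 1) :
    ∃ (a : Fin 3 →₀ ℕ) (J : Ideal (MvPolynomial (Fin 3) K)),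
      IsMonomialIdeal J ∧ (2 : ℕ∞) ≤ idealHeight J ∧
      I = Ideal.span {mono K a} * J ∧
      (IsPrettyClean I ↔ IsPrettyClean J) := by
  obtain ⟨A, rfl⟩ := hI
  obtain ⟨b₀, hb₀⟩ : A.Nonempty := by
    rw [Set.nonempty_iff_ne_empty]
    rintro rfl
    simp [idealHeight_bot] at h
  obtain ⟨a, ha⟩ := exists_forall_isLeast_image_apply ⟨b₀, hb₀⟩
  have hle : ∀ b ∈ A, a ≤ b := fun b hb i => (ha i).2 ⟨b, hb, rfl⟩
  set J := Ideal.span ((fun b => mono K b) '' ((· - a) '' A))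
  have hX : ∀ i, ¬ J ≤ Ideal.span {X i} := fun i hJ => by
    obtain ⟨b, hb, hbi⟩ := (ha i).1
    exact mono_mem_span_X_iff.1 (hJ (Ideal.subset_span ⟨b - a, ⟨b, hb, rfl⟩, rfl⟩))
      (by simp [hbi])
  have hIJ := span_mono_image_eq_span_mono_mul (K := K) hle
  have hJ : mono K (b₀ - a) ∈ J := Ideal.subset_span ⟨b₀ - a, ⟨b₀, hb₀, rfl⟩, rfl⟩
  refine ⟨a, J, ⟨_, rfl⟩, two_le_idealHeight hJ hX, hIJ, fun hpc => ?_,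
    fun hpc => hIJ ▸ hpc.span_mono_mul hX a⟩
  simpa only [colon_span_mono_image] using hpc.colon_span_mono ⟨A, rfl⟩ a
end

section
/- Let I be a monomial ideal in S = K[x_1,…,x_n] and let S/I = ⊕_{i=1}^r u_iK[Z_i] be a Stanley decomposition of S/I. Then this Stanley decomposition corresponds to a prime filtration of S/I if and only if the Stanley spaces T_i = u_iK[Z_i] can be ordered T_1,…,T_r so that I_k = I ⊕ T_1 ⊕ ⋯ ⊕ T_k is a monomial ideal for every k = 1,…,r. In that case I = I_0 ⊂ I_1 ⊂ ⋯ ⊂ I_r = S is a prime filtration with I_k = (I_{k−1}, u_k) and I_{k−1} : u_k = (x_i : x_i ∉ Z_k). -/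
open MvPolynomial

/-- The family of residue classes of the monomials `x^{u i}·x^v`, `supp v ⊆ Z i`,
of a candidate Stanley decomposition `S/I = ⊕ᵢ x^{u i} K[Z i]`. -/
noncomputable def stanleyFamily {K : Type*} [Field K] {n : ℕ}
    (I : Ideal (MvPolynomial (Fin n) K)) {r : ℕ}
    (u : Fin r → (Fin n →₀ ℕ)) (Z : Fin r → Finset (Fin n)) :
    (Σ i : Fin r, {v : Fin n →₀ ℕ // v.support ⊆ Z i}) →
      (MvPolynomial (Fin n) K ⧸ I) :=
  fun p => Ideal.Quotient.mk I (mono K (u p.1 + p.2.1))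

/-- `S/I = ⊕ᵢ x^{u i} K[Z i]` is a Stanley decomposition: the residue classes of
the monomials `x^{u i}·x^v` (`supp v ⊆ Z i`) form a `K`-basis of `S/I`. -/
def IsStanleyDecomposition {K : Type*} [Field K] {n : ℕ}
    (I : Ideal (MvPolynomial (Fin n) K)) {r : ℕ}
    (u : Fin r → (Fin n →₀ ℕ)) (Z : Fin r → Finset (Fin n)) : Prop :=
  LinearIndependent K (stanleyFamily I u Z) ∧
    Submodule.span K (Set.range (stanleyFamily I u Z)) = ⊤

/-- The Stanley space `x^a·K[Z]` viewed as a `K`-subspace of `S`: the `K`-span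
of the monomials `x^a·x^v` with `supp v ⊆ Z`. -/
noncomputable def stanleySubspace (K : Type*) [Field K] {n : ℕ}
    (a : Fin n →₀ ℕ) (Z : Finset (Fin n)) :
    Submodule K (MvPolynomial (Fin n) K) :=
  Submodule.span K ((fun v => mono K (a + v)) '' {v : Fin n →₀ ℕ | v.support ⊆ Z})

/-- The partial sum `I ⊕ T_{ord 0} ⊕ ⋯ ⊕ T_{ord k}` of Stanley spaces (in the
order given by `ord`) as a `K`-subspace of `S`. -/
noncomputable def stanleyPartialSum {K : Type*} [Field K] {n : ℕ}
    (I : Ideal (MvPolynomial (Fin n) K)) {r : ℕ}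
    (u : Fin r → (Fin n →₀ ℕ)) (Z : Fin r → Finset (Fin n))
    (ord : Equiv.Perm (Fin r)) (k : Fin r) :
    Submodule K (MvPolynomial (Fin n) K) :=
  Submodule.restrictScalars K I ⊔
    ⨆ i : Fin r, ⨆ _ : i ≤ k, stanleySubspace K (u (ord i)) (Z (ord i))

/-!
If the partial sum `J = I ⊕ T₁ ⊕ ⋯ ⊕ T_{k-1}` is a monomial ideal, linear independence of
the Stanley monomials modulo `I` shows that `J` contains no monomial `u_k x^v` of
`T_k = u_k K[Z_k]`. When `J ⊕ T_k` is an ideal as well, it equals `J + (u_k)`; and since `J`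
is monomial, `f u_k ∈ J` exactly when every term of `f` involves a variable outside `Z_k`,
so `J : u_k = (x_i : x_i ∉ Z_k)`, a prime ideal. Conversely, every ideal `I_k = (I_{k-1}, u_k)`
of a prime filtration of a monomial ideal is again monomial.
-/

section VariableIdeal

variable {R : Type*} [CommRing R] {σ : Type*}

lemma sub_aeval_mem_span_X_image (s : Set σ) [DecidablePred (· ∈ s)] (f : MvPolynomial σ R) :
    f - aeval (fun i => if i ∈ s then 0 else X i) f ∈ Ideal.span (X '' s) := by
  set ψ : MvPolynomial σ R →ₐ[R] MvPolynomial σ R :=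
    aeval fun i => if i ∈ s then 0 else X i
  induction f using MvPolynomial.induction_on with
  | C a => simp
  | add p q hp hq => simpa [add_sub_add_comm] using add_mem hp hq
  | mul_X p i hp =>
    have hXi : X i - ψ (X i) ∈ Ideal.span (X '' s) := by
      by_cases hi : i ∈ s
      · simpa [ψ, hi] using Ideal.subset_span (Set.mem_image_of_mem X hi)
      · simp [ψ, hi]
    have hsplit : p * X i - ψ (p * X i) = (p - ψ p) * X i + ψ p * (X i - ψ (X i)) := by
      rw [map_mul]
      ring
    rw [hsplit]
    exact add_mem (Ideal.mul_mem_right _ _ hp) (Ideal.mul_mem_left _ _ hXi)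

/-- The ideal is the kernel of the substitution `x_i ↦ 0` for `i ∈ s`. -/
lemma isPrime_span_X_image [IsDomain R] (s : Set σ) :
    (Ideal.span (X '' s : Set (MvPolynomial σ R))).IsPrime := by
  classical
  suffices Ideal.span (X '' s) =
      RingHom.ker (aeval (R := R) fun i => if i ∈ s then (0 : MvPolynomial σ R) else X i) from
    this ▸ RingHom.ker_isPrime _
  refine le_antisymm (Ideal.span_le.mpr ?_) fun f hf => ?_
  · rintro _ ⟨i, hi, rfl⟩
    simp [hi]
  · have hψf : aeval (fun i => if i ∈ s then (0 : MvPolynomial σ R) else X i) f = 0 := hf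
    simpa only [hψf, sub_zero] using sub_aeval_mem_span_X_image s f

end VariableIdeal

section MonomialIdeal

variable {K : Type*} [Field K] {σ : Type*}

lemma IsMonomialIdeal.sup {I J : Ideal (MvPolynomial σ K)}
    (hI : IsMonomialIdeal I) (hJ : IsMonomialIdeal J) : IsMonomialIdeal (I ⊔ J) := by
  obtain ⟨A, rfl⟩ := hI
  obtain ⟨B, rfl⟩ := hJ
  exact ⟨A ∪ B, by rw [Set.image_union, Ideal.span_union]⟩

lemma isMonomialIdeal_span_mono (a : σ →₀ ℕ) : IsMonomialIdeal (Ideal.span {mono K a}) :=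
  ⟨{a}, by rw [Set.image_singleton]⟩

lemma IsMonomialIdeal.mono_mem_of_mem_support {J : Ideal (MvPolynomial σ K)}
    (hJ : IsMonomialIdeal J) {f : MvPolynomial σ K} (hf : f ∈ J) {m : σ →₀ ℕ}
    (hm : m ∈ f.support) : mono K m ∈ J := by
  classical
  obtain ⟨A, rfl⟩ := hJ
  refine mem_ideal_span_monomial_image.mpr fun m' hm' => ?_
  rw [mono, support_monomial, if_neg one_ne_zero, Finset.mem_singleton] at hm'
  exact hm' ▸ mem_ideal_span_monomial_image.mp hf m hm

lemma IsMonomialIdeal.colon_span_mono_le {J : Ideal (MvPolynomial σ K)}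
    (hJ : IsMonomialIdeal J) {a : σ →₀ ℕ} {W : Finset σ}
    (hW : ∀ v : σ →₀ ℕ, v.support ⊆ W → mono K (a + v) ∉ J) :
    J.colon (Ideal.span {mono K a}) ≤ Ideal.span (X '' {i | i ∉ W}) := by
  intro f hf
  refine mem_ideal_span_X_image.mpr fun m hm => ?_
  by_contra! hmW
  have hfa : f * mono K a ∈ J := Ideal.mem_colon_span_singleton.mp hf
  have hma : m + a ∈ (f * mono K a).support := by
    rw [mem_support_iff, mono, coeff_mul_monomial, mul_one]
    exact mem_support_iff.mp hm
  refine hW m (fun i hi => ?_) (add_comm a m ▸ hJ.mono_mem_of_mem_support hfa hma)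
  by_contra hiW
  exact Finsupp.mem_support_iff.mp hi (hmW i hiW)

lemma IsPrimeFiltration.isMonomialIdeal {I : Ideal (MvPolynomial σ K)} {r : ℕ}
    {c : Fin (r + 1) → Ideal (MvPolynomial σ K)} {u : Fin r → (σ →₀ ℕ)}
    (hc : IsPrimeFiltration I c u) (hI : IsMonomialIdeal I) (j : Fin (r + 1)) :
    IsMonomialIdeal (c j) := by
  induction j using Fin.induction with
  | zero => exact hc.1 ▸ hI
  | succ j ih => exact hc.2.2.1 j ▸ ih.sup (isMonomialIdeal_span_mono _)

end MonomialIdeal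

section StanleySpace

variable {K : Type*} [Field K] {n : ℕ}

lemma mono_add_mem_stanleySubspace {a v : Fin n →₀ ℕ} {W : Finset (Fin n)}
    (hv : v.support ⊆ W) : mono K (a + v) ∈ stanleySubspace K a W :=
  Submodule.subset_span ⟨v, hv, rfl⟩

lemma mono_mem_stanleySubspace (a : Fin n →₀ ℕ) (W : Finset (Fin n)) :
    mono K a ∈ stanleySubspace K a W := by
  simpa using mono_add_mem_stanleySubspace (K := K) (a := a) (v := 0) (W := W) (by simp)

lemma stanleySubspace_le_span_mono (a : Fin n →₀ ℕ) (W : Finset (Fin n)) :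
    stanleySubspace K a W ≤ (Ideal.span {mono K a}).restrictScalars K := by
  refine Submodule.span_le.mpr ?_
  rintro _ ⟨v, -, rfl⟩
  exact Ideal.mem_span_singleton.mpr ⟨mono K v, (mono_mul a v).symm⟩

lemma coeff_eq_zero_of_mem_stanleySubspace {a m : Fin n →₀ ℕ} {W : Finset (Fin n)}
    {f : MvPolynomial (Fin n) K} (hf : f ∈ stanleySubspace K a W)
    (hm : ∀ v : Fin n →₀ ℕ, v.support ⊆ W → a + v ≠ m) : coeff m f = 0 := by
  classical
  refine (Submodule.span_le (p := LinearMap.ker (lcoeff K m))).mpr ?_ hf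
  rintro _ ⟨v, hv, rfl⟩
  simp [mono, coeff_monomial, hm v hv]

variable {J J' : Ideal (MvPolynomial (Fin n) K)} {a : Fin n →₀ ℕ} {W : Finset (Fin n)}

lemma eq_sup_span_mono_of_restrictScalars_eq
    (h : J'.restrictScalars K = J.restrictScalars K ⊔ stanleySubspace K a W) :
    J' = J ⊔ Ideal.span {mono K a} := by
  have hmem : ∀ x, x ∈ J' ↔ x ∈ J.restrictScalars K ⊔ stanleySubspace K a W := fun x => by
    rw [← h]
    rfl
  refine le_antisymm (fun x hx => ?_)
    (sup_le (fun x hx => (hmem x).mpr (Submodule.mem_sup_left hx)) ?_)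
  · obtain ⟨y, hy, t, ht, rfl⟩ := Submodule.mem_sup.mp ((hmem x).mp hx)
    exact add_mem (Ideal.mem_sup_left hy)
      (Ideal.mem_sup_right (stanleySubspace_le_span_mono a W ht))
  · rw [Ideal.span_singleton_le_iff_mem]
    exact (hmem _).mpr (Submodule.mem_sup_right (mono_mem_stanleySubspace a W))

/-- The monomial `x_i u` of `J'` has coefficient `0` in every element of `u K[W]`, so
`J ⊕ u K[W]` can only contain it through `J`. -/
lemma IsMonomialIdeal.span_X_le_colon_span_mono (hJ : IsMonomialIdeal J)
    (h : J'.restrictScalars K = J.restrictScalars K ⊔ stanleySubspace K a W) :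
    Ideal.span (X '' {i | i ∉ W}) ≤ J.colon (Ideal.span {mono K a}) := by
  refine Ideal.span_le.mpr ?_
  rintro _ ⟨i, hi, rfl⟩
  have hXi : X i * mono K a = mono K (Finsupp.single i 1 + a) := mono_mul _ _
  have ha : mono K a ∈ J'.restrictScalars K :=
    h ▸ Submodule.mem_sup_right (mono_mem_stanleySubspace a W)
  have hmem :
      mono K (Finsupp.single i 1 + a) ∈ J.restrictScalars K ⊔ stanleySubspace K a W := by
    rw [← h, ← hXi]
    exact J'.mul_mem_left _ ha
  obtain ⟨y, hy, t, ht, hyt⟩ := Submodule.mem_sup.mp hmem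
  have ht0 : coeff (Finsupp.single i 1 + a) t = 0 := by
    refine coeff_eq_zero_of_mem_stanleySubspace ht fun v hv hva => hi (hv ?_)
    rw [add_left_cancel (hva.trans (add_comm _ _))]
    simp
  have hy1 : coeff (Finsupp.single i 1 + a) y = 1 := by
    have := congrArg (coeff (Finsupp.single i 1 + a)) hyt
    rwa [coeff_add, ht0, add_zero, mono, coeff_monomial, if_pos rfl] at this
  exact Ideal.mem_colon_span_singleton.mpr
    (hXi ▸ hJ.mono_mem_of_mem_support hy (by simp [hy1]))

lemma IsMonomialIdeal.colon_span_mono_eq (hJ : IsMonomialIdeal J)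
    (h : J'.restrictScalars K = J.restrictScalars K ⊔ stanleySubspace K a W)
    (hW : ∀ v : Fin n →₀ ℕ, v.support ⊆ W → mono K (a + v) ∉ J) :
    J.colon (Ideal.span {mono K a}) = Ideal.span (X '' {i | i ∉ W}) :=
  le_antisymm (hJ.colon_span_mono_le hW) (hJ.span_X_le_colon_span_mono h)

end StanleySpace

section StanleySum

variable {K : Type*} [Field K] {n : ℕ} {I : Ideal (MvPolynomial (Fin n) K)} {r : ℕ}
  {u : Fin r → (Fin n →₀ ℕ)} {Z : Fin r → Finset (Fin n)}

variable (I u Z) in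
noncomputable def stanleySum (s : Set (Fin r)) : Submodule K (MvPolynomial (Fin n) K) :=
  I.restrictScalars K ⊔ ⨆ i ∈ s, stanleySubspace K (u i) (Z i)

lemma stanleySum_empty : stanleySum I u Z ∅ = I.restrictScalars K := by
  simp [stanleySum]

lemma stanleySum_insert (i : Fin r) (s : Set (Fin r)) :
    stanleySum I u Z (insert i s) = stanleySum I u Z s ⊔ stanleySubspace K (u i) (Z i) := by
  rw [stanleySum, stanleySum, iSup_insert, sup_left_comm, sup_comm]

lemma stanleyPartialSum_eq_stanleySum (ord : Equiv.Perm (Fin r)) (k : Fin r) :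
    stanleyPartialSum I u Z ord k = stanleySum I u Z (ord '' Set.Iic k) := by
  rw [stanleyPartialSum, stanleySum, iSup_image]
  rfl

lemma map_mkₐ_stanleySum (s : Set (Fin r)) :
    (stanleySum I u Z s).map (Ideal.Quotient.mkₐ K I).toLinearMap =
      Submodule.span K (stanleyFamily I u Z '' {p | p.1 ∈ s}) := by
  have hI : (I.restrictScalars K).map (Ideal.Quotient.mkₐ K I).toLinearMap = ⊥ :=
    eq_bot_iff.mpr <| Submodule.map_le_iff_le_comap.mpr fun x hx => by
      simpa [Ideal.Quotient.eq_zero_iff_mem] using hx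
  rw [stanleySum, Submodule.map_sup, hI, bot_sup_eq]
  simp only [stanleySubspace, Submodule.map_span, ← Submodule.span_iUnion₂]
  congr 1
  ext x
  simp [stanleyFamily, and_assoc]

lemma IsStanleyDecomposition.stanleySum_univ (hD : IsStanleyDecomposition I u Z) :
    stanleySum I u Z Set.univ = ⊤ := by
  have hker : LinearMap.ker (Ideal.Quotient.mkₐ K I).toLinearMap = I.restrictScalars K := by
    ext
    simp [Ideal.Quotient.eq_zero_iff_mem]
  calc stanleySum I u Z Set.univ
      = ((stanleySum I u Z Set.univ).map (Ideal.Quotient.mkₐ K I).toLinearMap).comap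
          (Ideal.Quotient.mkₐ K I).toLinearMap := by
        rw [Submodule.comap_map_eq, hker]
        exact (sup_eq_left.mpr le_sup_left).symm
    _ = ⊤ := by
        simp [map_mkₐ_stanleySum, hD.2]

lemma IsStanleyDecomposition.mono_notMem_stanleySum (hD : IsStanleyDecomposition I u Z)
    {s : Set (Fin r)} {i : Fin r} (hi : i ∉ s) {v : Fin n →₀ ℕ} (hv : v.support ⊆ Z i) :
    mono K (u i + v) ∉ stanleySum I u Z s := by
  intro h
  have := Submodule.mem_map_of_mem (f := (Ideal.Quotient.mkₐ K I).toLinearMap) h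
  rw [map_mkₐ_stanleySum] at this
  exact hD.1.notMem_span_image (s := {p | p.1 ∈ s}) (x := ⟨i, v, hv⟩) hi this

lemma IsStanleyDecomposition.isPrimeFiltration (hD : IsStanleyDecomposition I u Z)
    (ord : Equiv.Perm (Fin r)) {c : Fin (r + 1) → Ideal (MvPolynomial (Fin n) K)}
    (hmon : ∀ j, IsMonomialIdeal (c j))
    (hc : ∀ j, (c j).restrictScalars K = stanleySum I u Z (ord '' {i | i.castSucc < j})) :
    IsPrimeFiltration I c (fun k => u (ord k)) ∧
      ∀ k, filtFactor c (fun k => u (ord k)) k = Ideal.span (X '' {i | i ∉ Z (ord k)}) := by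
  have hstep : ∀ k : Fin r, (c k.succ).restrictScalars K =
      (c k.castSucc).restrictScalars K ⊔ stanleySubspace K (u (ord k)) (Z (ord k)) := by
    intro k
    rw [hc, hc, ← stanleySum_insert, ← Set.image_insert_eq]
    congr 2
    ext i
    simp [Fin.castSucc_lt_succ_iff, le_iff_eq_or_lt]
  have hnew : ∀ k : Fin r, ∀ v : Fin n →₀ ℕ, v.support ⊆ Z (ord k) →
      mono K (u (ord k) + v) ∉ c k.castSucc := fun k v hv hmem =>
    hD.mono_notMem_stanleySum (s := ord '' {i | i.castSucc < k.castSucc}) (by simp) hv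
      (by rw [← hc]; exact hmem)
  have hcolon : ∀ k,
      filtFactor c (fun k => u (ord k)) k = Ideal.span (X '' {i | i ∉ Z (ord k)}) :=
    fun k => (hmon _).colon_span_mono_eq (hstep k) (hnew k)
  have hfirst : c 0 = I := Submodule.restrictScalars_injective K _ _ <| by
    rw [hc]
    simp [stanleySum_empty]
  have hlast : c (Fin.last r) = ⊤ := Submodule.restrictScalars_injective K _ _ <| by
    rw [hc, Submodule.restrictScalars_top, ← hD.stanleySum_univ]
    congr 1
    ext i
    simp [Fin.castSucc_lt_last]
  have hprime : ∀ k, (filtFactor c (fun k => u (ord k)) k).IsPrime := fun k =>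
    hcolon k ▸ isPrime_span_X_image _
  exact ⟨⟨hfirst, hlast, fun k => eq_sup_span_mono_of_restrictScalars_eq (hstep k), hprime⟩,
    hcolon⟩

end StanleySum

/-- A Stanley decomposition `S/I = ⊕ᵢ uᵢK[Zᵢ]` corresponds to
a prime filtration of `S/I` (i.e., after reordering by `ord`, there is a prime
filtration `I = I₀ ⊂ ⋯ ⊂ I_r = S` with `I_k = (I_{k-1}, u_{ord k})`,
`I_{k-1} : u_{ord k} = (x_i : x_i ∉ Z_{ord k})`, and
`I_k = I ⊕ T_{ord 1} ⊕ ⋯ ⊕ T_{ord k}`) if and only if the Stanley spaces can be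
ordered so that every partial sum `I ⊕ T_1 ⊕ ⋯ ⊕ T_k` is a monomial ideal. -/
theorem stanley_decomposition_corresponds_to_prime_filtration_iff
    {K : Type*} [Field K] {n : ℕ} (I : Ideal (MvPolynomial (Fin n) K))
    (hI : IsMonomialIdeal I) {r : ℕ}
    (u : Fin r → (Fin n →₀ ℕ)) (Z : Fin r → Finset (Fin n))
    (hD : IsStanleyDecomposition I u Z) :
    (∃ (ord : Equiv.Perm (Fin r)) (c : Fin (r + 1) → Ideal (MvPolynomial (Fin n) K)),
        IsPrimeFiltration I c (fun k => u (ord k)) ∧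
        (∀ k : Fin r, filtFactor c (fun k => u (ord k)) k =
          Ideal.span ((fun i => (X i : MvPolynomial (Fin n) K)) ''
            {i : Fin n | i ∉ Z (ord k)})) ∧
        (∀ k : Fin r, Submodule.restrictScalars K (c k.succ) =
          stanleyPartialSum I u Z ord k)) ↔
      (∃ ord : Equiv.Perm (Fin r), ∀ k : Fin r,
        ∃ J : Ideal (MvPolynomial (Fin n) K), IsMonomialIdeal J ∧
          stanleyPartialSum I u Z ord k = Submodule.restrictScalars K J) := by
  constructor
  · rintro ⟨ord, c, hc, -, hsum⟩
    exact ⟨ord, fun k => ⟨c k.succ, hc.isMonomialIdeal hI _, (hsum k).symm⟩⟩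
  · rintro ⟨ord, hJ⟩
    choose J hJmon hJ using hJ
    let c : Fin (r + 1) → Ideal (MvPolynomial (Fin n) K) := Fin.cases I J
    have hc : ∀ j,
        (c j).restrictScalars K = stanleySum I u Z (ord '' {i | i.castSucc < j}) := by
      refine Fin.cases (by simp [c, stanleySum_empty]) fun k => ?_
      rw [show c k.succ = J k from rfl, ← hJ, stanleyPartialSum_eq_stanleySum]
      congr 2
      ext i
      simp [Fin.castSucc_lt_succ_iff]
    obtain ⟨hfilt, hcolon⟩ := hD.isPrimeFiltration ord (Fin.cases hI hJmon) hc
    exact ⟨ord, c, hfilt, hcolon, fun k => hJ k ▸ rfl⟩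
end
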